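/- Let (C, ⊑) and (A, ≤) be complete lattices, let E_C : x =_η f^C(x) and E_A : x =_η f^A(x) be systems of m fixpoint equations over C and A with the same markers and with solutions s^C ∈ C^m and s^A ∈ A^m, and let ⟨α_i, γ_i⟩ : C → A be Galois insertions for i = 1,…,m. If f^C = Πγ ∘ f^A ∘ Πα (as functions C^m → C^m), then Πα(s^C) = s^A and s^C = Πγ(s^A). -/
import Mathlib


/-- Least fixpoint of `f` (Knaster–Tarski construction). -/
def muFix {L : Type*} [CompleteLattice L] (f : L → L) : L := sInf {x | f x ≤ x}

/-- Greatest fixpoint of `f` (Knaster–Tarski construction). -/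
def nuFix {L : Type*} [CompleteLattice L] (f : L → L) : L := sSup {x | x ≤ f x}
/-- Marker of a fixpoint equation: least (`mu`) or greatest (`nu`) fixpoint. -/
inductive EqMarker : Type
  | mu
  | nu

/-- Solution of a system of `m` fixpoint equations `x =_η f(x)` over a complete
lattice `L`, defined by recursion on `m`: the last variable is treated as a
parameter, the first `m-1` equations are solved recursively, the resulting
one-variable equation is solved by taking the least or greatest fixpoint
according to the marker of the last equation, and the value is substituted
back. -/
def eqSol {L : Type*} [CompleteLattice L] :
    (m : ℕ) → ((Fin m → L) → Fin m → L) → (Fin m → EqMarker) → (Fin m → L)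
  | 0, _, _ => fun i => i.elim0
  | m + 1, f, η =>
    let solPrev : L → Fin m → L := fun x =>
      eqSol m (fun v j => f (Fin.snoc v x) j.castSucc) (fun j => η j.castSucc)
    let g : L → L := fun x => f (Fin.snoc (solPrev x) x) (Fin.last m)
    let slast : L :=
      match η (Fin.last m) with
      | EqMarker.mu => muFix g
      | EqMarker.nu => nuFix g
    Fin.snoc (solPrev slast) slast


section Helpers
variable {L : Type*} [CompleteLattice L]

lemma muFix_fixed {f : L → L} (hf : Monotone f) : f (muFix f) = muFix f := by
  have h1 : f (muFix f) ≤ muFix f := le_sInf fun x hx => le_trans (hf (sInf_le hx)) hx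
  exact le_antisymm h1 (sInf_le (hf h1))

lemma nuFix_fixed {f : L → L} (hf : Monotone f) : f (nuFix f) = nuFix f := by
  have h1 : nuFix f ≤ f (nuFix f) := sSup_le fun x hx => le_trans hx (hf (le_sSup hx))
  exact le_antisymm (le_sSup (hf h1)) h1

lemma muFix_mono {f g : L → L} (h : ∀ x, f x ≤ g x) : muFix f ≤ muFix g :=
  sInf_le_sInf fun x hx => le_trans (h x) hx

lemma nuFix_mono {f g : L → L} (h : ∀ x, f x ≤ g x) : nuFix f ≤ nuFix g :=
  sSup_le_sSup fun x hx => le_trans hx (h x)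

lemma snoc_le_snoc {m : ℕ} {v v' : Fin m → L} {x x' : L}
    (h : ∀ j, v j ≤ v' j) (hx : x ≤ x') (k : Fin (m+1)) :
    (Fin.snoc v x : Fin (m+1) → L) k ≤ (Fin.snoc v' x' : Fin (m+1) → L) k := by
  induction k using Fin.lastCases with
  | last => simpa using hx
  | cast j => simpa using h j

end Helpers

lemma eqSol_le {L : Type*} [CompleteLattice L] :
    ∀ (m : ℕ) (f g : (Fin m → L) → Fin m → L) (η : Fin m → EqMarker),
      Monotone f → (∀ v i, f v i ≤ g v i) → ∀ i, eqSol m f η i ≤ eqSol m g η i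
  | 0, _, _, _, _, _, i => i.elim0
  | m+1, f, g, η, hf, hfg, i => by
    set η' : Fin m → EqMarker := fun j => η j.castSucc with hη'
    have hinnerMono : ∀ x : L, Monotone (fun (v : Fin m → L) (j : Fin m) => f (Fin.snoc v x) j.castSucc) := by
      intro x v v' hv (j : Fin m)
      exact hf (fun k => snoc_le_snoc hv le_rfl k) _
    set sPf : L → Fin m → L := fun x =>
      eqSol m (fun v j => f (Fin.snoc v x) j.castSucc) η' with hsPf
    set sPg : L → Fin m → L := fun x =>
      eqSol m (fun v j => g (Fin.snoc v x) j.castSucc) η' with hsPg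
    have hP : ∀ x j, sPf x j ≤ sPg x j := fun x =>
      eqSol_le m _ _ η' (hinnerMono x) (fun v j => hfg _ _)
    have hPmono : ∀ x x', x ≤ x' → ∀ j, sPf x j ≤ sPf x' j := by
      intro x x' hx
      refine eqSol_le m _ _ η' (hinnerMono x) ?_
      intro v (j : Fin m)
      exact hf (fun k => snoc_le_snoc (fun _ => le_rfl) hx k) j.castSucc
    set gf : L → L := fun x => f (Fin.snoc (sPf x) x) (Fin.last m) with hgf
    set gg : L → L := fun x => g (Fin.snoc (sPg x) x) (Fin.last m) with hgg
    have hgle : ∀ x, gf x ≤ gg x := by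
      intro x
      refine le_trans (hf (fun k => snoc_le_snoc (hP x) le_rfl k) (Fin.last m)) ?_
      exact hfg _ _
    set slf : L := match η (Fin.last m) with
      | EqMarker.mu => muFix gf
      | EqMarker.nu => nuFix gf with hslf
    set slg : L := match η (Fin.last m) with
      | EqMarker.mu => muFix gg
      | EqMarker.nu => nuFix gg with hslg
    have hsl : slf ≤ slg := by
      rw [hslf, hslg]
      cases η (Fin.last m)
      · exact muFix_mono hgle
      · exact nuFix_mono hgle
    have hLf : eqSol (m+1) f η = Fin.snoc (sPf slf) slf := rfl
    have hLg : eqSol (m+1) g η = Fin.snoc (sPg slg) slg := rfl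
    rw [hLf, hLg]
    refine Fin.lastCases ?_ ?_ i
    · simpa using hsl
    · intro j
      simpa using le_trans (hPmono slf slg hsl j) (hP slg j)

section Single
variable {C A : Type*} [CompleteLattice C] [CompleteLattice A]
  {gC : C → C} {gA : A → A} {α : C → A} {γ : A → C}

lemma gi_muFix (hgA : Monotone gA) (hgc : GaloisConnection α γ)
    (hins : ∀ a, α (γ a) = a) (heq : ∀ c, gC c = γ (gA (α c))) :
    α (muFix gC) = muFix gA ∧ muFix gC = γ (muFix gA) := by
  have hmC : Monotone gC := fun a b h => by
    rw [heq, heq]; exact hgc.monotone_u (hgA (hgc.monotone_l h))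
  have hfC := muFix_fixed hmC
  have hfA := muFix_fixed hgA
  have hαfix : gA (α (muFix gC)) = α (muFix gC) := by
    have h := congrArg α hfC
    rwa [heq, hins] at h
  have h1 : muFix gA ≤ α (muFix gC) := sInf_le (le_of_eq hαfix)
  have hγpre : gC (γ (muFix gA)) = γ (muFix gA) := by rw [heq, hins, hfA]
  have h2 : muFix gC ≤ γ (muFix gA) := sInf_le (le_of_eq hγpre)
  have h3 : α (muFix gC) ≤ muFix gA := by
    have := hgc.monotone_l h2; rwa [hins] at this
  have hαeq : α (muFix gC) = muFix gA := le_antisymm h3 h1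
  refine ⟨hαeq, ?_⟩
  calc muFix gC = γ (gA (α (muFix gC))) := by rw [← heq, hfC]
    _ = γ (muFix gA) := by rw [hαeq, hfA]

lemma gi_nuFix (hgA : Monotone gA) (hgc : GaloisConnection α γ)
    (hins : ∀ a, α (γ a) = a) (heq : ∀ c, gC c = γ (gA (α c))) :
    α (nuFix gC) = nuFix gA ∧ nuFix gC = γ (nuFix gA) := by
  have hmC : Monotone gC := fun a b h => by
    rw [heq, heq]; exact hgc.monotone_u (hgA (hgc.monotone_l h))
  have hfC := nuFix_fixed hmC
  have hfA := nuFix_fixed hgA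
  have hαfix : gA (α (nuFix gC)) = α (nuFix gC) := by
    have h := congrArg α hfC
    rwa [heq, hins] at h
  have h1 : α (nuFix gC) ≤ nuFix gA := le_sSup (le_of_eq hαfix.symm)
  have hγfix : gC (γ (nuFix gA)) = γ (nuFix gA) := by rw [heq, hins, hfA]
  have h2 : γ (nuFix gA) ≤ nuFix gC := le_sSup (le_of_eq hγfix.symm)
  have h3 : nuFix gA ≤ α (nuFix gC) := by
    have := hgc.monotone_l h2; rwa [hins] at this
  have hαeq : α (nuFix gC) = nuFix gA := le_antisymm h1 h3
  refine ⟨hαeq, ?_⟩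
  calc nuFix gC = γ (gA (α (nuFix gC))) := by rw [← heq, hfC]
    _ = γ (nuFix gA) := by rw [hαeq, hfA]

end Single

theorem gi_systems_aux {C A : Type*} [CompleteLattice C] [CompleteLattice A] :
    ∀ (m : ℕ) (fC : (Fin m → C) → Fin m → C) (fA : (Fin m → A) → Fin m → A),
      Monotone fC → Monotone fA → ∀ (η : Fin m → EqMarker)
      (α : Fin m → C → A) (γ : Fin m → A → C),
      (∀ i, GaloisConnection (α i) (γ i)) →
      (∀ i (a : A), α i (γ i a) = a) →
      (∀ (v : Fin m → C) (i : Fin m), fC v i = γ i (fA (fun j => α j (v j)) i)) →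
    (∀ i, α i (eqSol m fC η i) = eqSol m fA η i) ∧
      (∀ i, eqSol m fC η i = γ i (eqSol m fA η i))
  | 0, _, _, _, _, _, _, _, _, _, _ => ⟨fun i => i.elim0, fun i => i.elim0⟩
  | m+1, fC, fA, hfC, hfA, η, α, γ, hgc, hins, heq => by
    set η' : Fin m → EqMarker := fun j => η j.castSucc with hη'
    set α' : Fin m → C → A := fun j => α j.castSucc with hα'
    set γ' : Fin m → A → C := fun j => γ j.castSucc with hγ'
    set αl : C → A := α (Fin.last m) with hαl
    set γl : A → C := γ (Fin.last m) with hγl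
    have hinnerMonoC : ∀ x : C,
        Monotone (fun (v : Fin m → C) (j : Fin m) => fC (Fin.snoc v x) j.castSucc) := by
      intro x v v' hv (j : Fin m)
      exact hfC (fun k => snoc_le_snoc hv le_rfl k) _
    have hinnerMonoA : ∀ a : A,
        Monotone (fun (v : Fin m → A) (j : Fin m) => fA (Fin.snoc v a) j.castSucc) := by
      intro a v v' hv (j : Fin m)
      exact hfA (fun k => snoc_le_snoc hv le_rfl k) _
    set sPC : C → Fin m → C := fun x =>
      eqSol m (fun v j => fC (Fin.snoc v x) j.castSucc) η' with hsPC
    set sPA : A → Fin m → A := fun a =>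
      eqSol m (fun v j => fA (Fin.snoc v a) j.castSucc) η' with hsPA
    -- key: snoc commutes with α
    have hsnocα : ∀ (v : Fin m → C) (x : C),
        (fun k => α k ((Fin.snoc v x : Fin (m+1) → C) k)) =
          (Fin.snoc (fun j => α' j (v j)) (αl x) : Fin (m+1) → A) := by
      intro v x
      funext k
      induction k using Fin.lastCases with
      | last => simp [hαl]
      | cast j => simp [hα']
    have hIH : ∀ x : C,
        (∀ j, α' j (sPC x j) = sPA (αl x) j) ∧
          (∀ j, sPC x j = γ' j (sPA (αl x) j)) := by
      intro x
      refine gi_systems_aux m _ _ (hinnerMonoC x) (hinnerMonoA (αl x)) η' α' γ'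
        (fun j => hgc j.castSucc) (fun j a => hins j.castSucc a) ?_
      intro v (j : Fin m)
      rw [heq (Fin.snoc v x) j.castSucc, hsnocα v x]
    set gC : C → C := fun x => fC (Fin.snoc (sPC x) x) (Fin.last m) with hgC
    set gA : A → A := fun a => fA (Fin.snoc (sPA a) a) (Fin.last m) with hgA
    have hsPAmono : ∀ a a', a ≤ a' → ∀ j, sPA a j ≤ sPA a' j := by
      intro a a' ha
      refine eqSol_le m _ _ η' (hinnerMonoA a) ?_
      intro v (j : Fin m)
      exact hfA (fun k => snoc_le_snoc (fun _ => le_rfl) ha k) j.castSucc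
    have hgAmono : Monotone gA := by
      intro a a' ha
      exact hfA (fun k => snoc_le_snoc (hsPAmono a a' ha) ha k) (Fin.last m)
    have hgrel : ∀ x : C, gC x = γl (gA (αl x)) := by
      intro x
      show fC (Fin.snoc (sPC x) x) (Fin.last m) =
        γl (fA (Fin.snoc (sPA (αl x)) (αl x)) (Fin.last m))
      have h1 := heq (Fin.snoc (sPC x) x) (Fin.last m)
      rw [h1, hsnocα (sPC x) x]
      have h2 : (fun j => α' j (sPC x j)) = sPA (αl x) := funext fun j => (hIH x).1 j
      rw [h2, hγl]
    set slC : C := match η (Fin.last m) with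
      | EqMarker.mu => muFix gC
      | EqMarker.nu => nuFix gC with hslC
    set slA : A := match η (Fin.last m) with
      | EqMarker.mu => muFix gA
      | EqMarker.nu => nuFix gA with hslA
    have hlast : αl slC = slA ∧ slC = γl slA := by
      rw [hslC, hslA]
      cases η (Fin.last m)
      · exact gi_muFix hgAmono (hgc (Fin.last m)) (hins (Fin.last m)) hgrel
      · exact gi_nuFix hgAmono (hgc (Fin.last m)) (hins (Fin.last m)) hgrel
    have hUC : eqSol (m+1) fC η = Fin.snoc (sPC slC) slC := rfl
    have hUA : eqSol (m+1) fA η = Fin.snoc (sPA slA) slA := rfl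
    rw [hUC, hUA]
    constructor
    · intro i
      induction i using Fin.lastCases with
      | last => simpa using hlast.1
      | cast j =>
        simp only [Fin.snoc_castSucc]
        rw [show α j.castSucc = α' j from rfl, (hIH slC).1 j, hlast.1]
    · intro i
      induction i using Fin.lastCases with
      | last => simpa using hlast.2
      | cast j =>
        simp only [Fin.snoc_castSucc]
        rw [show γ j.castSucc = γ' j from rfl, (hIH slC).2 j, hlast.1]

/-- Galois insertions for systems: if `f^C = Πγ ∘ f^A ∘ Πα`, then
`Πα(s^C) = s^A` and `s^C = Πγ(s^A)`. -/
theorem galois_insertion_for_systems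
    {C A : Type*} [CompleteLattice C] [CompleteLattice A]
    (m : ℕ) (fC : (Fin m → C) → Fin m → C) (fA : (Fin m → A) → Fin m → A)
    (hfC : Monotone fC) (hfA : Monotone fA)
    (η : Fin m → EqMarker)
    (α : Fin m → C → A) (γ : Fin m → A → C)
    (hgc : ∀ i, GaloisConnection (α i) (γ i))
    (hins : ∀ i (a : A), α i (γ i a) = a)
    (heq : ∀ (v : Fin m → C) (i : Fin m), fC v i = γ i (fA (fun j => α j (v j)) i)) :
    (∀ i, α i (eqSol m fC η i) = eqSol m fA η i) ∧
      (∀ i, eqSol m fC η i = γ i (eqSol m fA η i)) :=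
  gi_systems_aux m fC fA hfC hfA η α γ hgc hins heq
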